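/- arXiv:2601.07747 — 2 statements merged into one kernel-verified Lean document; each statement's English description precedes it below -/
import Mathlib

section
/- Let 𝕆ω be a field of omega-series in a log-atomic monomial T, and write f^† = f'/f. Let f ∈ 𝕆ω be such that f ≉ T^k for every k ∈ ℕ. If f^† ≼ 1/T, then there is ℓ ∈ ℕ such that for all n ≥ ℓ: f^{(n+1)} ≍ f^{(ℓ)}/T^{n−ℓ+1} ≼ f/T^{n+1}. -/
/-!
Interface axiomatization of fields of transseries and omega-series, following
Berarducci–Mantova.  We do not construct Hahn fields; instead we record, as a
structure, the properties of the field of omega-series `𝕆ω` in a log-atomic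
monomial `T` (an ordered field containing `ℝ`, with `exp`/`log`, the class `J`
of purely infinite series, and the strongly `ℝ`-linear derivation `D`), and,
as a second structure, the composition `f ∘ x` of omega-series `f` with
elements `x > ℝ` of a confluent field of transseries `𝕌` (confluence is
precisely what guarantees the existence of such a composition, which we take
as primitive data).
-/

/-- Dominance: `a ≼ b` iff `|a| ≤ n * |b|` for some natural number `n`. -/
def domLE {K : Type*} [Field K] [LinearOrder K] [IsStrictOrderedRing K] (a b : K) : Prop :=
  ∃ n : ℕ, |a| ≤ (n : K) * |b|

/-- `a ≺ b` iff `a ≼ b` and `¬ b ≼ a` (equivalently `n * |a| < |b|` for all `n`). -/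
def domLT {K : Type*} [Field K] [LinearOrder K] [IsStrictOrderedRing K] (a b : K) : Prop :=
  domLE a b ∧ ¬ domLE b a

/-- `a ≍ b` iff `a ≼ b` and `b ≼ a`. -/
def domEq {K : Type*} [Field K] [LinearOrder K] [IsStrictOrderedRing K] (a b : K) : Prop :=
  domLE a b ∧ domLE b a

/-- Asymptotic equivalence: `a ∼ b` iff `a - b ≺ a`. -/
def domSim {K : Type*} [Field K] [LinearOrder K] [IsStrictOrderedRing K] (a b : K) : Prop :=
  domLT (a - b) a

/-- `x > ℝ`: `x` is larger than every real number (via the embedding `emb`). -/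
def gtReals {K : Type*} [Field K] [LinearOrder K] [IsStrictOrderedRing K] (emb : ℝ →+* K) (x : K) : Prop :=
  ∀ r : ℝ, emb r < x

/-- Interface for a field of omega-series `𝕆ω` in a log-atomic monomial `T`:
an ordered field containing `ℝ`, equipped with `exp` and `log`, the
distinguished log-atomic element `T > ℝ`, the additive group `J` of purely
infinite series, and the strongly `ℝ`-linear derivation `D` determined by
`D T = 1` and `D (exp γ) = exp γ * D γ`. -/
structure OmegaFieldStruct (O : Type*) [Field O] [LinearOrder O] [IsStrictOrderedRing O] where
  /-- the embedding of the real numbers (series with a single constant term) -/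
  emb : ℝ →+* O
  /-- the log-atomic monomial `T` -/
  T : O
  /-- the (total) exponential, inverse of `log` -/
  exp : O → O
  /-- the logarithm (meaningful on positive elements) -/
  log : O → O
  /-- the class of purely infinite series -/
  J : Set O
  /-- the derivation -/
  D : O → O
  T_gt_reals : gtReals emb T
  exp_add : ∀ a b : O, exp (a + b) = exp a * exp b
  exp_pos : ∀ a : O, 0 < exp a
  exp_strictMono : StrictMono exp
  log_exp : ∀ a : O, log (exp a) = a
  exp_log : ∀ a : O, 0 < a → exp (log a) = a
  exp_emb : ∀ r : ℝ, exp (emb r) = emb (Real.exp r)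
  /-- growth axiom: `(log 𝔪)^n < 𝔪`, extended to all positive infinite elements -/
  log_pow_lt : ∀ a : O, gtReals emb a → ∀ n : ℕ, (log a) ^ n < a
  J_zero : (0 : O) ∈ J
  J_add : ∀ a ∈ J, ∀ b ∈ J, a + b ∈ J
  J_neg : ∀ a ∈ J, -a ∈ J
  /-- purely infinite series are either zero or dominate `1` -/
  J_infinite : ∀ γ ∈ J, γ ≠ 0 → domLT 1 γ
  /-- `T` is log-atomic: its iterated logarithms are monomials `> 1`,
  hence purely infinite -/
  logIter_T_mem_J : ∀ n : ℕ, (log)^[n] T ∈ J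
  D_add : ∀ a b : O, D (a + b) = D a + D b
  D_mul : ∀ a b : O, D (a * b) = D a * b + a * D b
  D_T : D T = 1
  D_emb : ∀ r : ℝ, D (emb r) = 0
  D_exp : ∀ a : O, D (exp a) = exp a * D a
  /-- the H-field property: positive infinite elements have positive derivative -/
  D_pos_of_gt_reals : ∀ a : O, gtReals emb a → 0 < D a
  /-- the constants of the derivation are exactly the reals -/
  D_eq_zero_iff : ∀ a : O, D a = 0 ↔ ∃ r : ℝ, a = emb r

/-- Interface for the composition of omega-series by elements `x > ℝ` of a
confluent field of transseries `U`: for each such `x`, `f ↦ comp f x` is the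
unique strongly `ℝ`-linear ordered field embedding with `comp T x = x` and
`comp (exp γ) x = expU (comp γ x)`.  Confluence of `U` is what guarantees the
existence of this composition, which we take as primitive data. -/
structure CompStruct (O U : Type*) [Field O] [LinearOrder O] [IsStrictOrderedRing O] [Field U] [LinearOrder U] [IsStrictOrderedRing U]
    (Ω : OmegaFieldStruct O) where
  /-- the embedding of the real numbers into `U` -/
  embU : ℝ →+* U
  /-- the exponential of `U` -/
  expU : U → U
  /-- the logarithm of `U` (meaningful on positive elements) -/
  logU : U → U
  /-- the composition `f ∘ x` of an omega-series `f` with `x ∈ U`,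
  meaningful for `x > ℝ` -/
  comp : O → U → U
  expU_add : ∀ a b : U, expU (a + b) = expU a * expU b
  expU_pos : ∀ a : U, 0 < expU a
  expU_strictMono : StrictMono expU
  logU_expU : ∀ a : U, logU (expU a) = a
  expU_logU : ∀ a : U, 0 < a → expU (logU a) = a
  comp_add : ∀ (f g : O) (x : U), gtReals embU x →
    comp (f + g) x = comp f x + comp g x
  comp_mul : ∀ (f g : O) (x : U), gtReals embU x →
    comp (f * g) x = comp f x * comp g x
  comp_emb : ∀ (r : ℝ) (x : U), gtReals embU x → comp (Ω.emb r) x = embU r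
  comp_T : ∀ x : U, gtReals embU x → comp Ω.T x = x
  comp_exp : ∀ (f : O) (x : U), gtReals embU x →
    comp (Ω.exp f) x = expU (comp f x)
  comp_log : ∀ (f : O) (x : U), gtReals embU x → 0 < f →
    comp (Ω.log f) x = logU (comp f x)
  /-- right composition is an ordered field embedding -/
  comp_strictMono : ∀ x : U, gtReals embU x → StrictMono fun f : O => comp f x

/-!
The hypothesis `f† ≼ 1/T` makes `T·f†` finite, so `T·f† = c + o(1)` where `c` is its standard
part; say that `f` has index `c`. Let `h` have index `c` and put `w = T·h† ≠ 0`. Then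
`T·(h')† = w - 1 + T·w†`, and `T·w† = T·(log |w|)'` is infinitesimal as soon as
`log |w| ≺ log T`, by the H-field comparison of derivatives (`a ≺ b > ℝ` gives `a' ≺ b'`).
For `c ≠ 0` this holds because `w ≍ 1`; then `h' ≍ h/T` and `h'` has index `c - 1`. For `c = 0`
and `h ≉ 1`, `log |h|` is infinite, so `±log |h| + T^(-ε) > ℝ` has positive derivative and
`|w| = T·|(log |h|)'| ≽ T^(-ε)` for every `ε > 0`; this again gives `log |w| ≺ log T`, so `h'` has
index `-1` and `h' ≼ h/T`.

Thus each derivative lowers the index by one. If `c ∉ ℕ` we take `ℓ = 0`. If `c = k ∈ ℕ`, then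
`f⁽ᵏ⁾ ≍ f/T^k ≉ 1`, so `f⁽ᵏ⁺¹⁾` has index `-1` and `ℓ = k + 1` works.
-/

open ArchimedeanClass

section Dominance

variable {K : Type*} [Field K] [LinearOrder K] [IsStrictOrderedRing K] {a b : K}

theorem domLE_iff_mk_le : domLE a b ↔ mk b ≤ mk a := by
  simp [domLE, mk_le_mk, nsmul_eq_mul]

theorem domEq_iff_mk_eq : domEq a b ↔ mk a = mk b := by
  rw [domEq, domLE_iff_mk_le, domLE_iff_mk_le, le_antisymm_iff, and_comm]

theorem mk_div_eq_zero_iff (hb : b ≠ 0) : mk (a / b) = 0 ↔ mk a = mk b := by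
  rw [mk_div, LinearOrderedAddCommGroupWithTop.sub_eq_zero (mk_eq_top_iff.not.mpr hb)]

end Dominance

namespace OmegaSeries

variable {O : Type*} [Field O] [LinearOrder O] [IsStrictOrderedRing O] (Ω : OmegaFieldStruct O)

theorem emb_monotone : Monotone Ω.emb :=
  ringHom_monotone (fun _ hr => Real.isSquare_iff.mpr hr) Ω.emb

def embOrderRingHom : ℝ →+*o O := { Ω.emb with monotone' := emb_monotone Ω }

theorem emb_strictMono : StrictMono Ω.emb :=
  (emb_monotone Ω).strictMono_of_injective Ω.emb.injective

theorem mk_emb_nonneg (r : ℝ) : 0 ≤ mk (Ω.emb r) :=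
  mk_map_nonneg_of_archimedean (embOrderRingHom Ω) r

theorem mk_emb {r : ℝ} (hr : r ≠ 0) : mk (Ω.emb r) = 0 :=
  mk_map_of_archimedean' (embOrderRingHom Ω) hr

theorem gtReals_iff {x : O} : gtReals Ω.emb x ↔ 0 < x ∧ mk x < 0 := by
  rw [← mk_one, mk_lt_mk]
  constructor
  · intro hx
    have hpos : 0 < x := by simpa using hx 0
    exact ⟨hpos, fun n => by simpa [abs_of_pos hpos] using hx n⟩
  · rintro ⟨hpos, hx⟩ r
    calc Ω.emb r ≤ Ω.emb ⌈r⌉₊ := emb_monotone Ω (Nat.le_ceil r)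
      _ < x := by simpa [abs_of_pos hpos] using hx ⌈r⌉₊

theorem gtReals_add_of_mk_lt {x y : O} (hx : gtReals Ω.emb x) (h : mk x < mk y) :
    gtReals Ω.emb (x + y) := by
  have hpos := ((gtReals_iff Ω).mp hx).1
  have hy : |y| < x := by simpa [abs_of_pos hpos] using mk_lt_mk.mp h 1
  refine (gtReals_iff Ω).mpr ⟨?_, by rw [mk_add_eq_mk_left h]; exact ((gtReals_iff Ω).mp hx).2⟩
  linarith [neg_abs_le y]

theorem T_pos : 0 < Ω.T := ((gtReals_iff Ω).mp Ω.T_gt_reals).1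

theorem exp_zero : Ω.exp 0 = 1 := by simpa using Ω.exp_emb 0

theorem lt_log_iff_exp_lt {a y : O} (hy : 0 < y) : a < Ω.log y ↔ Ω.exp a < y := by
  conv_rhs => rw [← Ω.exp_log y hy]
  exact Ω.exp_strictMono.lt_iff_lt.symm

theorem log_lt_iff_lt_exp {a y : O} (hy : 0 < y) : Ω.log y < a ↔ y < Ω.exp a := by
  conv_rhs => rw [← Ω.exp_log y hy]
  exact Ω.exp_strictMono.lt_iff_lt.symm

theorem gtReals_log {x : O} (hx : gtReals Ω.emb x) : gtReals Ω.emb (Ω.log x) := fun r =>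
  (lt_log_iff_exp_lt Ω ((gtReals_iff Ω).mp hx).1).mpr (Ω.exp_emb r ▸ hx _)

theorem log_T_gtReals : gtReals Ω.emb (Ω.log Ω.T) := gtReals_log Ω Ω.T_gt_reals

theorem log_T_pos : 0 < Ω.log Ω.T := ((gtReals_iff Ω).mp (log_T_gtReals Ω)).1

theorem mk_log_neg {x : O} (hx : 0 < x) (h : mk x ≠ 0) : mk (Ω.log x) < 0 := by
  rcases h.lt_or_gt with hinf | hsmall
  · exact ((gtReals_iff Ω).mp (gtReals_log Ω ((gtReals_iff Ω).mpr ⟨hx, hinf⟩))).2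
  · have : gtReals Ω.emb (-Ω.log x) := fun r => by
      rw [lt_neg, ← map_neg, log_lt_iff_lt_exp Ω hx, Ω.exp_emb]
      exact lt_of_pos_of_archimedean (embOrderRingHom Ω) hsmall (Real.exp_pos _)
    simpa using ((gtReals_iff Ω).mp this).2

theorem D_zero : Ω.D 0 = 0 := by
  simpa using Ω.D_add 0 0

theorem D_neg (a : O) : Ω.D (-a) = -Ω.D a := by
  rw [eq_neg_iff_add_eq_zero, ← Ω.D_add, neg_add_cancel, D_zero]

theorem D_emb_mul (r : ℝ) (a : O) : Ω.D (Ω.emb r * a) = Ω.emb r * Ω.D a := by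
  rw [Ω.D_mul, Ω.D_emb, zero_mul, zero_add]

theorem D_natCast_mul (n : ℕ) (a : O) : Ω.D (n * a) = n * Ω.D a := by
  simpa using D_emb_mul Ω n a

theorem D_log {x : O} (hx : 0 < x) : Ω.D (Ω.log x) = Ω.D x / x := by
  have h := Ω.D_exp (Ω.log x)
  rw [Ω.exp_log x hx] at h
  field_simp
  linarith

theorem D_log_abs {x : O} (hx : x ≠ 0) : Ω.D (Ω.log |x|) = Ω.D x / x := by
  rw [D_log Ω (abs_pos.mpr hx)]
  rcases abs_choice x with h | h <;> rw [h]
  rw [D_neg, neg_div_neg_eq]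

/-- `T ^ r` for real exponents `r`. -/
def Tpow (r : ℝ) : O := Ω.exp (Ω.emb r * Ω.log Ω.T)

theorem Tpow_pos (r : ℝ) : 0 < Tpow Ω r := Ω.exp_pos _

theorem D_Tpow (r : ℝ) : Ω.D (Tpow Ω r) = Ω.emb r * Tpow Ω r / Ω.T := by
  rw [Tpow, Ω.D_exp, D_emb_mul, D_log Ω (T_pos Ω), Ω.D_T]
  ring

theorem Tpow_le_one {r : ℝ} (hr : r ≤ 0) : Tpow Ω r ≤ 1 := by
  rw [← exp_zero Ω]
  refine Ω.exp_strictMono.monotone (mul_nonpos_of_nonpos_of_nonneg ?_ (log_T_pos Ω).le)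
  simpa using emb_monotone Ω hr

theorem mk_D_lt_mk_D {a b : O} (hb : gtReals Ω.emb b) (hab : mk b < mk a) :
    mk (Ω.D b) < mk (Ω.D a) := by
  have hmk (n : ℕ) : mk b < mk (n * a) :=
    hab.trans_le (by rw [mk_mul]; exact le_add_of_nonneg_left (mk_natCast_nonneg n))
  have hDb : 0 < Ω.D b := Ω.D_pos_of_gt_reals b hb
  refine mk_lt_mk.mpr fun n => ?_
  -- `b ± n·a` are again positive infinite, so their derivatives are positive
  have hplus := Ω.D_pos_of_gt_reals _ (gtReals_add_of_mk_lt Ω hb (hmk n))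
  have hminus :=
    Ω.D_pos_of_gt_reals _ (gtReals_add_of_mk_lt Ω hb ((hmk n).trans_eq (mk_neg _).symm))
  rw [Ω.D_add, D_natCast_mul] at hplus
  rw [Ω.D_add, D_neg, D_natCast_mul] at hminus
  have : |(n : O) * Ω.D a| < Ω.D b := abs_lt.mpr ⟨by linarith, by linarith⟩
  simpa [abs_mul, nsmul_eq_mul, abs_of_pos hDb] using this

theorem mk_T_mul_D_pos {a : O} (ha : mk (Ω.log Ω.T) < mk a) : 0 < mk (Ω.T * Ω.D a) := by
  have hT : mk Ω.T ≠ ⊤ := mk_eq_top_iff.not.mpr (T_pos Ω).ne'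
  have h := mk_D_lt_mk_D Ω (log_T_gtReals Ω) ha
  rw [D_log Ω (T_pos Ω), Ω.D_T, mk_div, mk_one, zero_sub] at h
  rw [mk_mul, ← LinearOrderedAddCommGroupWithTop.add_neg_cancel_of_ne_top hT]
  exact (add_lt_add_iff_right_of_ne_top hT).mpr h

theorem emb_mul_Tpow_lt_T_mul_D {M : O} (hM : gtReals Ω.emb M) (ε : ℝ) :
    Ω.emb ε * Tpow Ω (-ε) < Ω.T * Ω.D M := by
  have hT := T_pos Ω
  have hD := Ω.D_pos_of_gt_reals _ fun r => (hM r).trans (lt_add_of_pos_right M (Tpow_pos Ω (-ε)))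
  rw [Ω.D_add, D_Tpow, map_neg, neg_mul, neg_div, ← sub_eq_add_neg, sub_pos] at hD
  calc Ω.emb ε * Tpow Ω (-ε) = Ω.T * (Ω.emb ε * Tpow Ω (-ε) / Ω.T) := by field_simp
    _ < Ω.T * Ω.D M := mul_lt_mul_of_pos_left hD hT

theorem emb_mul_Tpow_lt_T_mul_abs_D {M : O} (hM : mk M < 0) (ε : ℝ) :
    Ω.emb ε * Tpow Ω (-ε) < Ω.T * |Ω.D M| := by
  have hT := (T_pos Ω).le
  have hM0 : M ≠ 0 := by rintro rfl; simp at hM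
  rcases hM0.lt_or_gt with hneg | hpos
  · have h := emb_mul_Tpow_lt_T_mul_D Ω ((gtReals_iff Ω).mpr ⟨neg_pos.mpr hneg, by rwa [mk_neg]⟩) ε
    rw [D_neg] at h
    exact h.trans_le (mul_le_mul_of_nonneg_left (neg_le_abs _) hT)
  · exact (emb_mul_Tpow_lt_T_mul_D Ω ((gtReals_iff Ω).mpr ⟨hpos, hM⟩) ε).trans_le
      (mul_le_mul_of_nonneg_left (le_abs_self _) hT)

theorem mk_lt_mk_of_forall_abs_le {a b : O} (hb : gtReals Ω.emb b)
    (h : ∀ ε : ℝ, 0 < ε → ∃ r : ℝ, |a| ≤ Ω.emb ε * b + Ω.emb r) : mk b < mk a := by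
  have hb0 := ((gtReals_iff Ω).mp hb).1
  refine mk_lt_mk.mpr fun n => ?_
  obtain ⟨r, hr⟩ := h (1 / (2 * (n + 1))) (by positivity)
  have hhalf : (n : O) * Ω.emb (1 / (2 * (n + 1))) ≤ 1 / 2 := by
    rw [← map_natCast Ω.emb, ← map_mul, ← map_ofNat Ω.emb 2, ← map_one Ω.emb, ← map_div₀]
    refine emb_monotone Ω ?_
    rw [mul_one_div, div_le_div_iff₀ (by positivity) two_pos]
    linarith
  have hr' : 2 * ((n : O) * Ω.emb r) < b := by
    simpa [map_mul, map_ofNat, mul_assoc] using hb (2 * (n * r))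
  calc n • |a| ≤ (n : O) * (Ω.emb (1 / (2 * (n + 1))) * b + Ω.emb r) := by
        rw [nsmul_eq_mul]; exact mul_le_mul_of_nonneg_left hr (Nat.cast_nonneg n)
    _ = (n : O) * Ω.emb (1 / (2 * (n + 1))) * b + (n : O) * Ω.emb r := by ring
    _ < |b| := by
        rw [abs_of_pos hb0]
        nlinarith

theorem mk_log_T_lt_mk_log {y : O} (hy : 0 < y) (hbdd : 0 ≤ mk y)
    (hlow : ∀ ε : ℝ, 0 < ε → ∃ t : ℝ, Tpow Ω (-ε) ≤ Ω.emb t * y) :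
    mk (Ω.log Ω.T) < mk (Ω.log y) := by
  obtain ⟨s, hs⟩ := exists_nat_ge_of_mk_nonneg hbdd
  have hupper : Ω.log y ≤ Ω.emb (Real.log (s + 1)) := by
    rw [← Ω.exp_strictMono.le_iff_le, Ω.exp_log y hy, Ω.exp_emb, Real.exp_log (by positivity)]
    simpa using hs.trans (le_add_of_nonneg_right zero_le_one)
  refine mk_lt_mk_of_forall_abs_le Ω (log_T_gtReals Ω) fun ε hε => ?_
  obtain ⟨t, ht⟩ := hlow ε hε
  have hembt : 0 < Ω.emb t := pos_of_mul_pos_left ((Tpow_pos Ω _).trans_le ht) hy.le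
  have ht0 : 0 < t := (emb_strictMono Ω).lt_iff_lt.mp (by rwa [map_zero])
  have hlower : -(Ω.emb ε * Ω.log Ω.T) - Ω.emb (Real.log t) ≤ Ω.log y := by
    have hexp : Ω.exp (Ω.emb (Real.log t)) = Ω.emb t := by rw [Ω.exp_emb, Real.exp_log ht0]
    have hsplit : Ω.exp (-(Ω.emb ε * Ω.log Ω.T) - Ω.emb (Real.log t)) * Ω.emb t =
        Tpow Ω (-ε) := by
      rw [← hexp, ← Ω.exp_add, sub_add_cancel, Tpow, map_neg, neg_mul]
    rw [← Ω.exp_strictMono.le_iff_le, Ω.exp_log y hy]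
    refine le_of_mul_le_mul_right ?_ hembt
    rw [hsplit, mul_comm]
    exact ht
  have hε' : 0 ≤ Ω.emb ε * Ω.log Ω.T :=
    mul_nonneg (by simpa using emb_monotone Ω hε.le) (log_T_pos Ω).le
  have hs' := emb_monotone Ω (le_add_of_le_of_nonneg (le_abs_self (Real.log (s + 1)))
    (abs_nonneg (Real.log t)))
  have ht' := emb_monotone Ω (le_add_of_nonneg_of_le (abs_nonneg (Real.log (s + 1)))
    (le_abs_self (Real.log t)))
  refine ⟨|Real.log (s + 1)| + |Real.log t|, abs_le.mpr ⟨?_, ?_⟩⟩ <;> linarith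

def tLogDeriv (h : O) : O := Ω.T * (Ω.D h / h)

theorem D_eq_div_T_mul_tLogDeriv {h : O} (hh : h ≠ 0) : Ω.D h = h / Ω.T * tLogDeriv Ω h := by
  rw [tLogDeriv]
  field_simp [(T_pos Ω).ne']

theorem tLogDeriv_D {h : O} (hh : h ≠ 0) (hw : tLogDeriv Ω h ≠ 0) :
    tLogDeriv Ω (Ω.D h) = tLogDeriv Ω h + tLogDeriv Ω (tLogDeriv Ω h) - 1 := by
  have hT := (T_pos Ω).ne'
  set u := Ω.D h / h with hu
  have hu0 : u ≠ 0 := right_ne_zero_of_mul hw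
  have hDh : Ω.D h = h * u := by rw [hu]; field_simp
  simp only [tLogDeriv, ← hu]
  rw [hDh, Ω.D_mul, hDh, Ω.D_mul, Ω.D_T]
  field_simp
  ring

/-- `h` has index `c` when `T·h† = c + o(1)`: to first order `h` differentiates like `T ^ c`. -/
def HasIndex (h : O) (c : ℝ) : Prop := h ≠ 0 ∧ 0 < mk (tLogDeriv Ω h - Ω.emb c)

variable {Ω}

theorem hasIndex_stdPart {f : O} (hf : f ≠ 0) (hdag : domLE (Ω.D f / f) (1 / Ω.T)) :
    HasIndex Ω f (stdPart (tLogDeriv Ω f)) := by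
  have hT := T_pos Ω
  refine ⟨hf, mk_sub_stdPart_pos (embOrderRingHom Ω) ?_⟩
  obtain ⟨n, hn⟩ := hdag
  rw [abs_of_pos (one_div_pos.mpr hT)] at hn
  rw [← mk_one, mk_le_mk]
  refine ⟨n, ?_⟩
  rw [tLogDeriv, abs_mul, abs_of_pos hT, abs_one, nsmul_eq_mul, mul_one]
  calc Ω.T * |Ω.D f / f| ≤ Ω.T * (n * (1 / Ω.T)) := mul_le_mul_of_nonneg_left hn hT.le
    _ = n := by field_simp

namespace HasIndex

variable {h : O} {c : ℝ}

theorem mk_tLogDeriv_nonneg (hs : HasIndex Ω h c) : 0 ≤ mk (tLogDeriv Ω h) := by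
  have := min_le_mk_add (Ω.emb c) (tLogDeriv Ω h - Ω.emb c)
  rw [add_sub_cancel] at this
  exact (le_min (mk_emb_nonneg Ω c) hs.2.le).trans this

theorem mk_tLogDeriv (hs : HasIndex Ω h c) (hc : c ≠ 0) : mk (tLogDeriv Ω h) = 0 := by
  have := mk_add_eq_mk_left (a := Ω.emb c) (b := tLogDeriv Ω h - Ω.emb c)
    (by rw [mk_emb Ω hc]; exact hs.2)
  rwa [add_sub_cancel, mk_emb Ω hc] at this

theorem mk_div_T_le_mk_D (hs : HasIndex Ω h c) : mk (h / Ω.T) ≤ mk (Ω.D h) := by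
  rw [D_eq_div_T_mul_tLogDeriv Ω hs.1, mk_mul]
  exact le_add_of_nonneg_right hs.mk_tLogDeriv_nonneg

theorem mk_D (hs : HasIndex Ω h c) (hc : c ≠ 0) : mk (Ω.D h) = mk (h / Ω.T) := by
  rw [D_eq_div_T_mul_tLogDeriv Ω hs.1, mk_mul, hs.mk_tLogDeriv hc, add_zero]

theorem D_of_forall_Tpow_le (hs : HasIndex Ω h c) (hw : tLogDeriv Ω h ≠ 0)
    (hlow : ∀ ε : ℝ, 0 < ε → ∃ t : ℝ, Tpow Ω (-ε) ≤ Ω.emb t * |tLogDeriv Ω h|) :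
    HasIndex Ω (Ω.D h) (c - 1) := by
  have hDh : Ω.D h ≠ 0 := by
    rw [D_eq_div_T_mul_tLogDeriv Ω hs.1]
    exact mul_ne_zero (div_ne_zero hs.1 (T_pos Ω).ne') hw
  have hlog : 0 < mk (tLogDeriv Ω (tLogDeriv Ω h)) := by
    rw [tLogDeriv, ← D_log_abs Ω hw]
    refine mk_T_mul_D_pos Ω (mk_log_T_lt_mk_log Ω (abs_pos.mpr hw) ?_ hlow)
    rw [mk_abs]
    exact hs.mk_tLogDeriv_nonneg
  have hsplit : tLogDeriv Ω (Ω.D h) - Ω.emb (c - 1) =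
      (tLogDeriv Ω h - Ω.emb c) + tLogDeriv Ω (tLogDeriv Ω h) := by
    rw [tLogDeriv_D Ω hs.1 hw, map_sub, map_one]
    ring
  refine ⟨hDh, ?_⟩
  rw [hsplit]
  exact (lt_min hs.2 hlog).trans_le (min_le_mk_add _ _)

theorem D_of_ne_zero (hs : HasIndex Ω h c) (hc : c ≠ 0) : HasIndex Ω (Ω.D h) (c - 1) := by
  have hmk := hs.mk_tLogDeriv hc
  refine hs.D_of_forall_Tpow_le (fun hw => by simp [hw] at hmk) fun ε _ => ?_
  obtain ⟨n, hn⟩ := mk_le_mk.mp (hmk.trans mk_one.symm).le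
  refine ⟨n, (Tpow_le_one Ω (by linarith)).trans ?_⟩
  simpa [nsmul_eq_mul] using hn

theorem D_of_eq_zero (hs : HasIndex Ω h 0) (hh : mk h ≠ 0) : HasIndex Ω (Ω.D h) (-1) := by
  have hDh : Ω.D h ≠ 0 := fun hD => by
    obtain ⟨r, rfl⟩ := (Ω.D_eq_zero_iff h).mp hD
    exact hh (mk_emb Ω fun hr => hs.1 (by simp [hr]))
  have hw : tLogDeriv Ω h ≠ 0 := mul_ne_zero (T_pos Ω).ne' (div_ne_zero hDh hs.1)
  have hinf : mk (Ω.log |h|) < 0 := mk_log_neg Ω (abs_pos.mpr hs.1) (by rwa [mk_abs])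
  have hlow (ε : ℝ) (hε : 0 < ε) : ∃ t : ℝ, Tpow Ω (-ε) ≤ Ω.emb t * |tLogDeriv Ω h| := by
    have hD := emb_mul_Tpow_lt_T_mul_abs_D Ω hinf ε
    rw [D_log_abs Ω hs.1, ← abs_of_pos (T_pos Ω), ← abs_mul] at hD
    have hε' : Ω.emb (1 / ε) * Ω.emb ε = 1 := by
      rw [← map_mul, one_div_mul_cancel hε.ne', map_one]
    refine ⟨1 / ε, ?_⟩
    calc Tpow Ω (-ε) = Ω.emb (1 / ε) * (Ω.emb ε * Tpow Ω (-ε)) := by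
          rw [← mul_assoc, hε', one_mul]
      _ ≤ Ω.emb (1 / ε) * |tLogDeriv Ω h| :=
          mul_le_mul_of_nonneg_left hD.le (by simpa using emb_monotone Ω (one_div_pos.mpr hε).le)
  simpa using hs.D_of_forall_Tpow_le hw hlow

theorem iterate_D (hs : HasIndex Ω h c) {m : ℕ} (hm : ∀ j < m, c ≠ j) :
    HasIndex Ω (Ω.D^[m] h) (c - m) ∧ mk (Ω.D^[m] h) = mk (h / Ω.T ^ m) := by
  induction m with
  | zero => simpa using hs
  | succ m ih =>
    obtain ⟨hsm, hmk⟩ := ih fun j hj => hm j (hj.trans m.lt_succ_self)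
    have hcm : c - m ≠ 0 := sub_ne_zero.mpr (hm m m.lt_succ_self)
    rw [Function.iterate_succ_apply', hsm.mk_D hcm, mk_div, hmk, ← mk_div, div_div, ← pow_succ]
    exact ⟨by simpa [sub_sub] using hsm.D_of_ne_zero hcm, rfl⟩

theorem mk_iterate_D (hs : HasIndex Ω h c) (hc : ∀ j : ℕ, c ≠ j) (m : ℕ) :
    mk (Ω.D^[m] h) = mk (h / Ω.T ^ m) :=
  (hs.iterate_D fun j _ => hc j).2

end HasIndex

theorem iterate_D_domEq_of_mk {f : O} {ℓ : ℕ}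
    (htail : ∀ m : ℕ, mk (Ω.D^[m] (Ω.D^[ℓ] f)) = mk (Ω.D^[ℓ] f / Ω.T ^ m))
    (hℓ : mk (f / Ω.T ^ ℓ) ≤ mk (Ω.D^[ℓ] f)) {n : ℕ} (hn : ℓ ≤ n) :
    domEq ((Ω.D)^[n + 1] f) ((Ω.D)^[ℓ] f / Ω.T ^ (n - ℓ + 1)) ∧
      domLE ((Ω.D)^[ℓ] f / Ω.T ^ (n - ℓ + 1)) (f / Ω.T ^ (n + 1)) := by
  refine ⟨?_, ?_⟩
  · rw [domEq_iff_mk_eq, ← htail, ← Function.iterate_add_apply]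
    congr 2
    omega
  · rw [domLE_iff_mk_le, show n + 1 = ℓ + (n - ℓ + 1) by omega, pow_add, ← div_div,
      mk_div (f / _), mk_div (Ω.D^[ℓ] f), sub_eq_add_neg, sub_eq_add_neg]
    gcongr

end OmegaSeries

open OmegaSeries

/-- **Iterated derivatives, slowly varying case.** Let `f ∈ 𝕆ω` with `f ≉ T^k`
for every `k ∈ ℕ`.  If `f^† ≼ 1/T` (where `f^† = f'/f`), then there is
`ℓ ∈ ℕ` such that for all `n ≥ ℓ`:
`f⁽ⁿ⁺¹⁾ ≍ f⁽ˡ⁾/T^{n−ℓ+1} ≼ f/T^{n+1}`. -/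
theorem statement11 {O : Type*} [Field O] [LinearOrder O] [IsStrictOrderedRing O]
    (Ω : OmegaFieldStruct O) (f : O)
    (hf : ∀ k : ℕ, ¬ domEq f (Ω.T ^ k))
    (hdag : domLE (Ω.D f / f) (1 / Ω.T)) :
    ∃ ℓ : ℕ, ∀ n : ℕ, ℓ ≤ n →
      domEq ((Ω.D)^[n + 1] f) ((Ω.D)^[ℓ] f / Ω.T ^ (n - ℓ + 1)) ∧
      domLE ((Ω.D)^[ℓ] f / Ω.T ^ (n - ℓ + 1)) (f / Ω.T ^ (n + 1)) := by
  rcases eq_or_ne f 0 with rfl | hf0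
  · refine ⟨0, fun n => iterate_D_domEq_of_mk ?_ (by simp)⟩
    simp [Function.iterate_fixed (D_zero Ω)]
  have hs := hasIndex_stdPart hf0 hdag
  by_cases hnat : ∃ k : ℕ, stdPart (tLogDeriv Ω f) = k
  · obtain ⟨k, hk⟩ := hnat
    obtain ⟨hsk, hmk⟩ := hs.iterate_D (m := k) fun j hj => hk ▸ (Nat.cast_lt.mpr hj).ne'
    rw [hk, sub_self] at hsk
    have hflat : mk (Ω.D^[k] f) ≠ 0 := fun h0 => hf k <| domEq_iff_mk_eq.mpr <|
      (mk_div_eq_zero_iff (pow_ne_zero k (T_pos Ω).ne')).mp (hmk ▸ h0)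
    refine ⟨k + 1, fun n => iterate_D_domEq_of_mk ?_ ?_⟩
    · rw [Function.iterate_succ_apply']
      exact (hsk.D_of_eq_zero hflat).mk_iterate_D fun j =>
        (neg_one_lt_zero.trans_le j.cast_nonneg).ne
    · calc mk (f / Ω.T ^ (k + 1)) = mk (Ω.D^[k] f / Ω.T) := by
            rw [pow_succ, ← div_div, mk_div _ Ω.T, mk_div (Ω.D^[k] f), hmk]
        _ ≤ mk (Ω.D^[k + 1] f) := by
            rw [Function.iterate_succ_apply']
            exact hsk.mk_div_T_le_mk_D
  · exact ⟨0, fun n => iterate_D_domEq_of_mk (hs.mk_iterate_D fun j h => hnat ⟨j, h⟩) (by simp)⟩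
end

section
/- Let 𝕆ω be a field of omega-series in a log-atomic monomial T, and write g^† = g'/g. For every g ∈ 𝕆ω with g ≠ 0 and g^† ≻ 1/T (equivalently log|g| ≻ log T), we have (g/g')' ≺ 1, (g')^† ∼ g^†, and log|g'| ∼ log|g| ≻ log T. -/
/-!
The engine is the H-field axiom: if `v - |f| > ℝ`, then `v + f` and `v - f` are both positive
infinite, so their derivatives are positive and `|f'| < v'`. Applied to multiples of `f`, this
gives `f ≺ g ⇒ f' ≺ g'` and `f ≼ g ⇒ f' ≼ g'` whenever `|g| > ℝ`.

Write `φ = g†` and `ψ = log|g|`, so that `ψ' = φ`. If `ψ ≼ log T` then `φ ≼ (log T)' = 1/T`,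
hence `ψ ≻ log T`. From `1/ψ ≺ 1 ≺ log T` we get `φ/ψ² ≺ 1/T`, so `1/T < |φ| < ψ²` and
`|log|φ|| < log T + 2 log|ψ| ≺ ψ` by the growth axiom. Differentiating gives `φ† ≺ φ`, and the
claims follow from `(g/g')' = -φ†/φ`, `(g')† = φ + φ†` and `log|g'| = log|φ| + ψ`.
-/

section Dominance

variable {K : Type*} [Field K] [LinearOrder K] [IsStrictOrderedRing K] {a b c : K}

theorem domLT_iff : domLT a b ↔ ∀ n : ℕ, (n : K) * |a| < |b| := by
  refine ⟨fun h n => not_le.1 fun hn => h.2 ⟨n, hn⟩, fun h => ⟨⟨1, ?_⟩, fun ⟨n, hn⟩ => ?_⟩⟩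
  · simpa using (h 1).le
  · exact (h n).not_ge hn

theorem domLT_iff_not_domLE : domLT a b ↔ ¬ domLE b a := by
  refine ⟨And.right, fun h => ⟨?_, h⟩⟩
  rcases le_total |a| |b| with hab | hba
  · exact ⟨1, by simpa using hab⟩
  · exact absurd ⟨1, by simpa using hba⟩ h

theorem abs_lt_abs_of_domLT (h : domLT a b) : |a| < |b| := by
  simpa using domLT_iff.1 h 1

theorem ne_zero_of_domLT (h : domLT a b) : b ≠ 0 := by
  rintro rfl
  simpa using domLT_iff.1 h 0

theorem domLT_of_abs_le (hab : |a| ≤ |b|) (hbc : domLT b c) : domLT a c :=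
  domLT_iff.2 fun n => (mul_le_mul_of_nonneg_left hab n.cast_nonneg).trans_lt (domLT_iff.1 hbc n)

theorem domLT_trans (hab : domLT a b) (hbc : domLT b c) : domLT a c :=
  domLT_of_abs_le (abs_lt_abs_of_domLT hab).le hbc

theorem domLT_abs_right : domLT a |b| ↔ domLT a b := by
  simp only [domLT_iff, abs_abs]

theorem domLT_neg_left : domLT (-a) b ↔ domLT a b := by
  simp only [domLT_iff, abs_neg]

theorem domLT_mul_right (h : domLT a b) (hc : c ≠ 0) : domLT (a * c) (b * c) := by
  refine domLT_iff.2 fun n => ?_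
  rw [abs_mul, abs_mul, ← mul_assoc]
  exact mul_lt_mul_of_pos_right (domLT_iff.1 h n) (abs_pos.2 hc)

theorem domLT_add (ha : domLT a c) (hb : domLT b c) : domLT (a + b) c := by
  refine domLT_iff.2 fun n => ?_
  have h₁ := domLT_iff.1 ha (2 * n)
  have h₂ := domLT_iff.1 hb (2 * n)
  push_cast at h₁ h₂
  nlinarith [abs_add_le a b, (Nat.cast_nonneg n : (0 : K) ≤ n)]

theorem domSim_add_of_domLT (h : domLT a b) : domSim (a + b) b := by
  refine domLT_iff.2 fun n => ?_
  have h₁ := domLT_iff.1 h (n + 1)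
  push_cast at h₁
  have h₂ : |b| ≤ |a + b| + |a| := by simpa using abs_add_le (a + b) (-a)
  rw [add_sub_cancel_right]
  linarith

end Dominance

section GtReals

variable {K : Type*} [Field K] [LinearOrder K] [IsStrictOrderedRing K] {emb : ℝ →+* K} {a b : K}

theorem gtReals_pos (h : gtReals emb a) : 0 < a := by
  simpa using h 0

theorem gtReals_natCast (h : gtReals emb a) (n : ℕ) : (n : K) < a := by
  simpa using h n

theorem gtReals_of_le (h : gtReals emb a) (hab : a ≤ b) : gtReals emb b :=
  fun r => (h r).trans_le hab

theorem gtReals_of_le_two_mul (h : gtReals emb a) (hab : a ≤ 2 * b) : gtReals emb b := by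
  intro r
  have := h (2 * r)
  rw [map_mul, map_ofNat] at this
  linarith

theorem gtReals_abs (h : gtReals emb a) : gtReals emb |a| :=
  gtReals_of_le h (le_abs_self a)

theorem gtReals_abs_of_domLT (h : gtReals emb a) (hab : domLT a b) : gtReals emb |b| :=
  gtReals_of_le h ((le_abs_self a).trans (abs_lt_abs_of_domLT hab).le)

theorem inv_domLT_one_of_gtReals_abs (h : gtReals emb |a|) : domLT a⁻¹ 1 :=
  domLT_iff.2 fun n => by
    rw [abs_inv, abs_one, ← div_eq_mul_inv, div_lt_one (gtReals_pos h)]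
    exact gtReals_natCast h n

theorem domLT_one_of_gtReals (h : gtReals emb a) : domLT 1 a :=
  domLT_iff.2 fun n => by simpa [abs_of_pos (gtReals_pos h)] using gtReals_natCast h n

end GtReals

namespace OmegaFieldStruct

variable {O : Type*} [Field O] [LinearOrder O] [IsStrictOrderedRing O] (Ω : OmegaFieldStruct O)
  {a b f g : O}

theorem exp_zero : Ω.exp 0 = 1 := by
  have h := Ω.exp_add 0 0
  rw [add_zero] at h
  exact (mul_eq_left₀ (Ω.exp_pos 0).ne').1 h.symm

theorem log_one : Ω.log 1 = 0 := by
  simpa [Ω.exp_zero] using Ω.log_exp 0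

theorem log_mul (ha : 0 < a) (hb : 0 < b) : Ω.log (a * b) = Ω.log a + Ω.log b := by
  rw [← Ω.log_exp (Ω.log a + Ω.log b), Ω.exp_add, Ω.exp_log a ha, Ω.exp_log b hb]

theorem log_inv (ha : 0 < a) : Ω.log a⁻¹ = -Ω.log a := by
  have h := Ω.log_mul ha (inv_pos.2 ha)
  rw [mul_inv_cancel₀ ha.ne', Ω.log_one] at h
  linarith

theorem log_lt_log (ha : 0 < a) (hab : a < b) : Ω.log a < Ω.log b := by
  refine Ω.exp_strictMono.lt_iff_lt.1 ?_
  rwa [Ω.exp_log a ha, Ω.exp_log b (ha.trans hab)]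

theorem gtReals_log (h : gtReals Ω.emb a) : gtReals Ω.emb (Ω.log a) := fun r =>
  Ω.exp_strictMono.lt_iff_lt.1 <| by
    rw [Ω.exp_emb, Ω.exp_log a (gtReals_pos h)]
    exact h _

theorem domLT_log_self (h : gtReals Ω.emb a) : domLT (Ω.log a) a := by
  have hlog := gtReals_pos (Ω.gtReals_log h)
  refine domLT_iff.2 fun n => ?_
  rw [abs_of_pos hlog, abs_of_pos (gtReals_pos h)]
  rcases le_or_gt (Ω.log a) n with hle | hlt
  · calc (n : O) * Ω.log a ≤ ((n * n : ℕ) : O) := by push_cast; gcongr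
      _ < a := gtReals_natCast h _
  · calc (n : O) * Ω.log a < Ω.log a ^ 2 := by rw [sq]; gcongr
      _ < a := Ω.log_pow_lt a h 2

theorem D_zero : Ω.D 0 = 0 := by
  simpa using Ω.D_add 0 0

theorem D_one : Ω.D 1 = 0 := by
  simpa using Ω.D_mul 1 1

theorem D_neg (a : O) : Ω.D (-a) = -Ω.D a := by
  have := Ω.D_add a (-a)
  rw [add_neg_cancel, Ω.D_zero] at this
  linarith

theorem D_natCast_mul (n : ℕ) (a : O) : Ω.D (n * a) = n * Ω.D a := by
  rw [← map_natCast Ω.emb, Ω.D_mul, Ω.D_emb, zero_mul, zero_add]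

theorem abs_D_abs (a : O) : |Ω.D (|a|)| = |Ω.D a| := by
  rcases abs_choice a with h | h <;> simp [h, Ω.D_neg]

theorem D_inv (ha : a ≠ 0) : Ω.D a⁻¹ = -Ω.D a / a ^ 2 := by
  have h := Ω.D_mul a a⁻¹
  rw [mul_inv_cancel₀ ha, Ω.D_one] at h
  have h' : a * Ω.D a⁻¹ = -(Ω.D a * a⁻¹) := by linarith
  rw [eq_div_iff (pow_ne_zero 2 ha)]
  calc Ω.D a⁻¹ * a ^ 2 = a * Ω.D a⁻¹ * a := by ring
    _ = -Ω.D a := by rw [h', neg_mul, inv_mul_cancel_right₀ ha]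

theorem D_log (ha : 0 < a) : Ω.D (Ω.log a) = Ω.D a / a := by
  have h := Ω.D_exp (Ω.log a)
  rw [Ω.exp_log a ha] at h
  rw [h, mul_div_cancel_left₀ _ ha.ne']

theorem D_log_abs (ha : a ≠ 0) : Ω.D (Ω.log |a|) = Ω.D a / a := by
  rw [Ω.D_log (abs_pos.2 ha)]
  rcases abs_choice a with h | h <;> simp [h, Ω.D_neg, neg_div_neg_eq]

theorem abs_D_lt_D_of_gtReals_sub_abs {v : O} (h : gtReals Ω.emb (v - |f|)) :
    |Ω.D f| < Ω.D v := by
  have h₁ := Ω.D_pos_of_gt_reals (v + f) (gtReals_of_le h (by linarith [neg_abs_le f]))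
  have h₂ := Ω.D_pos_of_gt_reals (v + -f) (gtReals_of_le h (by linarith [le_abs_self f]))
  rw [Ω.D_add] at h₁
  rw [Ω.D_add, Ω.D_neg] at h₂
  exact abs_lt.2 ⟨by linarith, by linarith⟩

theorem D_domLT_D (hfg : domLT f g) (hg : gtReals Ω.emb |g|) : domLT (Ω.D f) (Ω.D g) := by
  refine domLT_iff.2 fun n => ?_
  have hsub : gtReals Ω.emb (|g| - |n * f|) := by
    refine gtReals_of_le_two_mul hg ?_
    have := domLT_iff.1 hfg (2 * n)
    rw [abs_mul, Nat.abs_cast]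
    push_cast at this
    linarith
  calc (n : O) * |Ω.D f| = |Ω.D (n * f)| := by rw [Ω.D_natCast_mul, abs_mul, Nat.abs_cast]
    _ < Ω.D |g| := Ω.abs_D_lt_D_of_gtReals_sub_abs hsub
    _ ≤ |Ω.D g| := (le_abs_self _).trans (Ω.abs_D_abs g).le

theorem D_domLE_D (hfg : domLE f g) (hg : gtReals Ω.emb |g|) : domLE (Ω.D f) (Ω.D g) := by
  obtain ⟨n, hn⟩ := hfg
  refine ⟨n + 1, ?_⟩
  have hsub : gtReals Ω.emb (((n + 1 : ℕ) : O) * |g| - |f|) :=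
    gtReals_of_le hg (by push_cast; linarith)
  calc |Ω.D f| ≤ Ω.D (((n + 1 : ℕ) : O) * |g|) := (Ω.abs_D_lt_D_of_gtReals_sub_abs hsub).le
    _ = ((n + 1 : ℕ) : O) * Ω.D |g| := Ω.D_natCast_mul _ _
    _ ≤ ((n + 1 : ℕ) : O) * |Ω.D g| := by
      gcongr
      exact (le_abs_self _).trans (Ω.abs_D_abs g).le

theorem D_log_T : Ω.D (Ω.log Ω.T) = 1 / Ω.T := by
  rw [Ω.D_log (gtReals_pos Ω.T_gt_reals), Ω.D_T]

theorem domLT_log_T_of_domLT_D {ψ : O} (hψ : domLT (1 / Ω.T) (Ω.D ψ)) :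
    domLT (Ω.log Ω.T) ψ := by
  refine domLT_iff_not_domLE.2 fun hle => domLT_iff_not_domLE.1 hψ ?_
  simpa only [Ω.D_log_T] using Ω.D_domLE_D hle (gtReals_abs (Ω.gtReals_log Ω.T_gt_reals))

theorem abs_D_lt_abs_mul_self {ψ : O} (hψ : gtReals Ω.emb |ψ|) : |Ω.D ψ| < |ψ| * |ψ| := by
  have hT0 := gtReals_pos Ω.T_gt_reals
  have hlogT := Ω.gtReals_log Ω.T_gt_reals
  have hinv : domLT ψ⁻¹ (Ω.log Ω.T) :=
    domLT_trans (inv_domLT_one_of_gtReals_abs hψ) (domLT_one_of_gtReals hlogT)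
  have h := abs_lt_abs_of_domLT (Ω.D_domLT_D hinv (gtReals_abs hlogT))
  rw [Ω.D_inv (abs_pos.1 (gtReals_pos hψ)), Ω.D_log_T, abs_div, abs_neg, abs_pow,
    abs_of_pos (one_div_pos.2 hT0), div_lt_iff₀ (pow_pos (gtReals_pos hψ) 2)] at h
  have hT1 : 1 / Ω.T < 1 := by
    rw [div_lt_one hT0]
    simpa using gtReals_natCast Ω.T_gt_reals 1
  nlinarith

theorem domLT_log_abs_D {ψ : O} (hlogT : domLT (Ω.log Ω.T) ψ) (hψ : domLT (1 / Ω.T) (Ω.D ψ)) :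
    domLT (Ω.log |Ω.D ψ|) ψ := by
  have hT := Ω.T_gt_reals
  have hT0 := gtReals_pos hT
  have hψ_gt : gtReals Ω.emb |ψ| := gtReals_abs_of_domLT (Ω.gtReals_log hT) hlogT
  have hψ0 := gtReals_pos hψ_gt
  have hlower : 1 / Ω.T < |Ω.D ψ| := by
    simpa [abs_of_pos hT0] using abs_lt_abs_of_domLT hψ
  have hDψ0 : 0 < |Ω.D ψ| := (one_div_pos.2 hT0).trans hlower
  have hlog_upper := Ω.log_lt_log hDψ0 (Ω.abs_D_lt_abs_mul_self hψ_gt)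
  have hlog_lower := Ω.log_lt_log (one_div_pos.2 hT0) hlower
  rw [Ω.log_mul hψ0 hψ0] at hlog_upper
  rw [one_div, Ω.log_inv hT0] at hlog_lower
  have hlogψ : domLT (Ω.log |ψ|) ψ := domLT_abs_right.1 (Ω.domLT_log_self hψ_gt)
  have hlogψ0 := gtReals_pos (Ω.gtReals_log hψ_gt)
  have hlogT0 := gtReals_pos (Ω.gtReals_log hT)
  refine domLT_of_abs_le ?_ (domLT_add hlogT (domLT_add hlogψ hlogψ))
  refine (abs_le.2 ⟨?_, ?_⟩).trans (le_abs_self _) <;> linarith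

end OmegaFieldStruct

/-- For every `g ∈ 𝕆ω` with `g ≠ 0` and `g^† ≻ 1/T` (equivalently
`log|g| ≻ log T`, where `g^† = g'/g`), we have `(g/g')' ≺ 1`,
`(g')^† ∼ g^†`, and `log|g'| ∼ log|g| ≻ log T`. -/
theorem statement14 {O : Type*} [Field O] [LinearOrder O] [IsStrictOrderedRing O]
    (Ω : OmegaFieldStruct O) (g : O) (hg : g ≠ 0)
    (hdag : domLT (1 / Ω.T) (Ω.D g / g)) :
    domLT (Ω.D (g / Ω.D g)) 1 ∧
    domSim (Ω.D (Ω.D g) / Ω.D g) (Ω.D g / g) ∧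
    domSim (Ω.log |Ω.D g|) (Ω.log |g|) ∧
    domLT (Ω.log Ω.T) (Ω.log |g|) := by
  set φ := Ω.D g / g
  have hDψ : Ω.D (Ω.log |g|) = φ := Ω.D_log_abs hg
  have hψ : domLT (Ω.log Ω.T) (Ω.log |g|) := Ω.domLT_log_T_of_domLT_D (hDψ ▸ hdag)
  have hlogφ : domLT (Ω.log |φ|) (Ω.log |g|) := hDψ ▸ Ω.domLT_log_abs_D hψ (hDψ ▸ hdag)
  have hφ0 : φ ≠ 0 := ne_zero_of_domLT hdag
  have hφ_dag : domLT (Ω.D φ / φ) φ := by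
    simpa only [Ω.D_log_abs hφ0, hDψ] using
      Ω.D_domLT_D hlogφ (gtReals_abs_of_domLT (Ω.gtReals_log Ω.T_gt_reals) hψ)
  have hDg : Ω.D g = φ * g := (div_mul_cancel₀ _ hg).symm
  refine ⟨?_, ?_, ?_, hψ⟩
  · have h : Ω.D (g / Ω.D g) = -(Ω.D φ / φ * φ⁻¹) := by
      rw [hDg, div_mul_cancel_right₀ hg, Ω.D_inv hφ0]
      ring
    rw [h, domLT_neg_left]
    simpa only [mul_inv_cancel₀ hφ0] using domLT_mul_right hφ_dag (inv_ne_zero hφ0)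
  · have h : Ω.D (Ω.D g) / Ω.D g = Ω.D φ / φ + φ := by
      rw [hDg, Ω.D_mul, hDg]
      field_simp
    rw [h]
    exact domSim_add_of_domLT hφ_dag
  · rw [hDg, abs_mul, Ω.log_mul (abs_pos.2 hφ0) (abs_pos.2 hg)]
    exact domSim_add_of_domLT hlogφ
end
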